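/- Let α ∈ 𝕋 be non-periodic under the doubling map and let g ∈ {L,R}^n. Then there exists a unique word u ∈ {L,R,⋆}^n such that u agrees with g at every digit where u is not ⋆, C(u) is a generalized cylinder set of degree n−1, and both g̃(⋆₁) and g̃(⋆₂) belong to C(u). This u is denoted legal(g). -/

import Mathlib

open Set MeasureTheory Filter
open scoped Classical

noncomputable section

/-- The circle `ℝ/ℤ`. -/
abbrev 𝕋 := AddCircle (1 : ℝ)

/-- The doubling map `h(x) = 2x` on the circle. -/
def dbl (x : 𝕋) : 𝕋 := x + x

/-- The representative of a point of the circle lying in `[0,1)`. -/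
def rep (x : 𝕋) : ℝ := (AddCircle.equivIco 1 0 x : ℝ)

/-- `⋆₁ = α/2`. -/
def star1 (α : 𝕋) : 𝕋 := ((rep α / 2 : ℝ) : 𝕋)

/-- `⋆₂ = α/2 + 1/2`. -/
def star2 (α : 𝕋) : 𝕋 := ((rep α / 2 + 1 / 2 : ℝ) : 𝕋)

/-- The closed semicircle `C(L) = {α/2 + t : t ∈ [0,1/2]}`. -/
def arcL (α : 𝕋) : Set 𝕋 := (fun t : ℝ => ((rep α / 2 + t : ℝ) : 𝕋)) '' Set.Icc 0 (1 / 2)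

/-- The closed semicircle `C(R) = {α/2 + 1/2 + t : t ∈ [0,1/2]}`. -/
def arcR (α : 𝕋) : Set 𝕋 :=
  (fun t : ℝ => ((rep α / 2 + 1 / 2 + t : ℝ) : 𝕋)) '' Set.Icc 0 (1 / 2)

/-- The open semicircle `{α/2 + t : t ∈ (0,1/2)}`. -/
def openArcL (α : 𝕋) : Set 𝕋 := (fun t : ℝ => ((rep α / 2 + t : ℝ) : 𝕋)) '' Set.Ioo 0 (1 / 2)

/-- The open semicircle `{α/2 + 1/2 + t : t ∈ (0,1/2)}`. -/
def openArcR (α : 𝕋) : Set 𝕋 :=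
  (fun t : ℝ => ((rep α / 2 + 1 / 2 + t : ℝ) : 𝕋)) '' Set.Ioo 0 (1 / 2)

/-- The alphabet `{L, R, ⋆}`. -/
inductive Letter | L | R | star
deriving DecidableEq

/-- `itin α x n` is the `(n+1)`-st letter of the itinerary `I^α(x)`. -/
def itin (α x : 𝕋) (n : ℕ) : Letter :=
  if dbl^[n] x = star1 α ∨ dbl^[n] x = star2 α then Letter.star
  else if dbl^[n] x ∈ openArcL α then Letter.L else Letter.R

/-- The lamination `x ≈_α y`. -/
def approx (α : 𝕋) (x y : 𝕋) : Prop :=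
  ∀ n : ℕ, itin α x n = itin α y n ∨ itin α x n = Letter.star ∨ itin α y n = Letter.star

/-- A point is periodic under the doubling map. -/
def IsPeriodicPt' (x : 𝕋) : Prop := ∃ k : ℕ, 1 ≤ k ∧ dbl^[k] x = x

/-- `α` is periodic under the doubling map. -/
def Periodic' (α : 𝕋) : Prop := IsPeriodicPt' α

/-- `α` is pre-periodic under the doubling map. -/
def PrePeriodic (α : 𝕋) : Prop := ∃ m : ℕ, IsPeriodicPt' (dbl^[m] α)

/-- `D` is a gluing link with `n` arcs with respect to `≈_α`: a disjoint union of `n` closed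
arcs whose `2n` endpoints occur in counterclockwise cyclic order and are consecutively glued
by `≈_α`. -/
def IsGluingLink (α : 𝕋) (n : ℕ) (D : Set 𝕋) : Prop :=
  0 < n ∧ ∃ s e : ℕ → ℝ,
    (∀ i < n, s i ≤ e i) ∧
    (∀ i j : ℕ, i < j → j < n → e i < s j) ∧
    (∀ i < n, ∀ j < n, e j < s i + 1) ∧
    D = ⋃ i ∈ Finset.range n, (fun t : ℝ => (t : 𝕋)) '' Set.Icc (s i) (e i) ∧
    (∀ i < n, approx α ((e i : ℝ) : 𝕋) ((s ((i + 1) % n) : ℝ) : 𝕋))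

/-- `L̃(x)`: the `h`-preimage of `x` in the interior of `C(L)` (for `x ≠ α`). -/
def tldL (α x : 𝕋) : 𝕋 :=
  if ((rep x / 2 : ℝ) : 𝕋) ∈ openArcL α then ((rep x / 2 : ℝ) : 𝕋)
  else ((rep x / 2 + 1 / 2 : ℝ) : 𝕋)

/-- `R̃(x)`: the `h`-preimage of `x` in the interior of `C(R)` (for `x ≠ α`). -/
def tldR (α x : 𝕋) : 𝕋 :=
  if ((rep x / 2 : ℝ) : 𝕋) ∈ openArcR α then ((rep x / 2 : ℝ) : 𝕋)
  else ((rep x / 2 + 1 / 2 : ℝ) : 𝕋)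

/-- The inverse branch associated with a single letter of `{L,R}`
(`true` codes `L`, `false` codes `R`). -/
def tldB (α : 𝕋) (b : Bool) (x : 𝕋) : 𝕋 := if b then tldL α x else tldR α x

/-- `g̃ = g̃[1] ∘ ⋯ ∘ g̃[n]` for a word `g ∈ {L,R}^*`. -/
def wtld (α : 𝕋) (g : List Bool) (x : 𝕋) : 𝕋 := g.foldr (fun b y => tldB α b y) x

/-- The embedding `e(θ) = exp(2πiθ)` of the circle into `ℂ`. -/
def emb (x : 𝕋) : ℂ := Complex.exp (2 * Real.pi * Complex.I * (rep x))

/-- The chord of a pair of points of the circle: the closed Euclidean segment joining their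
images in `ℂ`. -/
def chord (a b : 𝕋) : Set ℂ := segment ℝ (emb a) (emb b)

/-- The union of all chords `l_g` for words `g ∈ {L,R}^n`. -/
def chordsUnion (α : 𝕋) (n : ℕ) : Set ℂ :=
  ⋃ g ∈ {g : List Bool | g.length = n},
    chord (wtld α g (star1 α)) (wtld α g (star2 α))

/-- The closed unit disk minus the chords of level `n`. -/
def diskMinus (α : 𝕋) (n : ℕ) : Set ℂ := Metric.closedBall (0 : ℂ) 1 \ chordsUnion α n

/-- `C` is a generalized cylinder set of degree `n`: the trace on the circle of the closure of
a connected component of the closed unit disk minus the chords of level `n`. -/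
def IsGCS (α : 𝕋) (n : ℕ) (C : Set 𝕋) : Prop :=
  ∃ z ∈ diskMinus α n,
    C = {x : 𝕋 | emb x ∈ closure (connectedComponentIn (diskMinus α n) z)}

/-- The closed region of the circle associated with a letter (`⋆` imposes no restriction). -/
def semi (α : 𝕋) : Letter → Set 𝕋
  | Letter.L => arcL α
  | Letter.R => arcR α
  | Letter.star => Set.univ

/-- `C(u)` for a word `u ∈ {L,R,⋆}^m`. -/
def cylSet (α : 𝕋) (u : List Letter) : Set 𝕋 :=
  {x : 𝕋 | ∀ i < u.length, dbl^[i] x ∈ semi α (u.getD i Letter.star)}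

/-- The digit sequence of `I(α) = I^α(α)` (0-indexed: `ia α n` is the `(n+1)`-st digit). -/
def ia (α : 𝕋) (n : ℕ) : Letter := itin α α n

/-- A set `ℛ ⊆ ℕ` of indices is `D`-rare. -/
def DRare (D : ℕ) (R : Finset ℕ) : Prop :=
  ∀ i : ℕ, (R.filter (fun j => i ≤ j ∧ j ≤ i + D)).card ≤ 3

/-- The `i`-th digit (1-based) of `I(α)[1..n]` is `(D,ℛ)`-duplicating. -/
def DupDigit (α : 𝕋) (D : ℕ) (R : Finset ℕ) (n i : ℕ) : Prop :=
  ∃ a b : ℕ, 1 ≤ a ∧ a ≤ i ∧ i ≤ b ∧ b ≤ n ∧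
    (∀ j, a ≤ j → j ≤ b → j ∉ R → ia α (j - 1) = ia α (j - a)) ∧
    (b = n ∨ D < b - a + 1)


/-- `α` is strongly recurrent. -/
def StronglyRecurrent (α : 𝕋) : Prop :=
  ∀ D : ℕ, 0 < D → ∀ τ : ℝ, τ < 1 →
    ∃ n : ℕ, D < n ∧ ∃ R : Finset ℕ, R ⊆ Finset.Icc 1 n ∧ DRare D R ∧
      τ * n < ((Finset.Icc 1 n).filter (fun i => DupDigit α D R n i)).card

/-- `α` is weakly pre-periodic with period `k`. -/
def WeaklyPrePeriodicWith (α : 𝕋) (k : ℕ) : Prop :=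
  1 ≤ k ∧ ∃ m : ℕ, 1 ≤ m ∧ ∃ X : Letter, (X = Letter.L ∨ X = Letter.R) ∧
    ∀ n : ℕ, ia α (m + k * n - 1) = X

/-- `α` is weakly pre-periodic (for some period). -/
def WeaklyPrePeriodic (α : 𝕋) : Prop := ∃ k : ℕ, WeaklyPrePeriodicWith α k

end

/-- `u` is the legal word associated with `g ∈ {L,R}^*`: `u` agrees with `g` at every digit
where `u` is not `⋆`, `C(u)` is a generalized cylinder set of degree `|g| - 1`, and `C(u)`
contains both `g̃(⋆₁)` and `g̃(⋆₂)`. (`true` codes the letter `L`, `false` codes `R`.) -/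
def IsLegalOf (α : 𝕋) (g : List Bool) (u : List Letter) : Prop :=
  u.length = g.length ∧
  (∀ i < g.length, u.getD i Letter.star ≠ Letter.star →
    u.getD i Letter.star = (if g.getD i true then Letter.L else Letter.R)) ∧
  IsGCS α (g.length - 1) (cylSet α u) ∧
  wtld α g (star1 α) ∈ cylSet α u ∧ wtld α g (star2 α) ∈ cylSet α u


/-!
Let `z = g̃(⋆₁)`. As `α` is not periodic, `z` lies on no chord of level `n - 1`. These finitely
many chords cut the disk into convex cells, so the only generalized cylinder set of degree `n - 1`
containing `z` is the trace of the closed cell of `z`: the points of the circle that none of the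
chords separates from `z` (`cell α g`).

Pulling a chord back by an inverse branch of the doubling map preserves separation inside that
branch's semicircle and puts the whole other semicircle on the side of `α`. By induction on `g`
this gives `C(legal α g) = cell α g`, where `legal α (b :: g)` starts with `⋆` exactly when `α`
lies in `C(legal α g)`.

A word `u` obtained from `g` by starring letters is determined by `C(u)`: if `u` has a `⋆` at
position `i`, flipping the `i`-th letter of `g` moves `z` to a point that is still in `C(u)` but
lies in no cylinder set keeping a letter at position `i`.
-/

section AffineComplement

variable {E ι : Type*} [AddCommGroup E] [Module ℝ E]

lemma convex_setOf_pos_mul (f : E →ᵃ[ℝ] ℝ) (k : ℝ) : Convex ℝ {v | 0 < f v * k} := by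
  intro x hx y hy a b ha hb hab
  simp only [Set.mem_ofPred_eq, Convex.combo_affine_apply hab, smul_eq_mul] at hx hy ⊢
  rcases ha.lt_or_eq with ha | rfl
  · nlinarith
  · simp_all

variable [TopologicalSpace E] [IsTopologicalAddGroup E] [ContinuousSMul ℝ E]
  {s : Set E} {f : ι → E →ᴬ[ℝ] ℝ} {z : E}

omit [IsTopologicalAddGroup E] [ContinuousSMul ℝ E] in
lemma Convex.inter_setOf_forall_pos_mul (hs : Convex ℝ s) (f : ι → E →ᴬ[ℝ] ℝ) (z : E) :
    Convex ℝ (s ∩ {v | ∀ i, 0 < f i v * f i z}) := by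
  rw [Set.ofPred_forall]
  exact hs.inter (convex_iInter fun i => convex_setOf_pos_mul (f i).toAffineMap (f i z))

theorem connectedComponentIn_inter_forall_ne_zero [Finite ι] (hs : Convex ℝ s)
    (hz : z ∈ s ∩ {v | ∀ i, f i v ≠ 0}) :
    connectedComponentIn (s ∩ {v | ∀ i, f i v ≠ 0}) z = s ∩ {v | ∀ i, 0 < f i v * f i z} := by
  have hU : IsOpen {v | ∀ i, 0 < f i v * f i z} := by
    rw [Set.ofPred_forall]
    exact isOpen_iInter_of_finite fun i =>
      isOpen_lt continuous_const ((f i).continuous.mul continuous_const)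
  have hV : IsOpen {v | ∃ i, f i v * f i z < 0} := by
    rw [Set.ofPred_exists]
    exact isOpen_iUnion fun i => isOpen_lt ((f i).continuous.mul continuous_const) continuous_const
  have hUV : Disjoint {v | ∀ i, 0 < f i v * f i z} {v | ∃ i, f i v * f i z < 0} :=
    Set.disjoint_left.2 fun v hu ⟨i, hi⟩ => (hu i).not_gt hi
  have hDUV : s ∩ {v | ∀ i, f i v ≠ 0} ⊆
      {v | ∀ i, 0 < f i v * f i z} ∪ {v | ∃ i, f i v * f i z < 0} := by
    rintro v ⟨-, hv⟩
    by_cases h : ∀ i, 0 < f i v * f i z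
    · exact Or.inl h
    · obtain ⟨i, hi⟩ := not_forall.1 h
      exact Or.inr ⟨i, (not_lt.1 hi).lt_of_ne (mul_ne_zero (hv i) (hz.2 i))⟩
  have hzU : ∀ i, 0 < f i z * f i z := fun i => mul_self_pos.2 (hz.2 i)
  apply subset_antisymm
  · refine Set.subset_inter ((connectedComponentIn_subset _ _).trans Set.inter_subset_left) ?_
    exact isPreconnected_connectedComponentIn.subset_left_of_subset_union hU hV hUV
      ((connectedComponentIn_subset _ _).trans hDUV) ⟨z, mem_connectedComponentIn hz, hzU⟩
  · refine (hs.inter_setOf_forall_pos_mul f z).isPreconnected.subset_connectedComponentIn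
      ⟨hz.1, hzU⟩ fun v hv => ⟨hv.1, fun i h => ?_⟩
    simpa [h] using hv.2 i

theorem closure_connectedComponentIn_inter_forall_ne_zero [Finite ι] (hs : Convex ℝ s)
    (hsc : IsClosed s) (hz : z ∈ s ∩ {v | ∀ i, f i v ≠ 0}) :
    closure (connectedComponentIn (s ∩ {v | ∀ i, f i v ≠ 0}) z) =
      s ∩ {v | ∀ i, 0 ≤ f i v * f i z} := by
  rw [connectedComponentIn_inter_forall_ne_zero hs hz]
  apply subset_antisymm
  · refine closure_minimal (Set.inter_subset_inter_right _ fun v hv i => (hv i).le) ?_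
    rw [Set.ofPred_forall]
    exact hsc.inter (isClosed_iInter fun i =>
      isClosed_le continuous_const ((f i).continuous.mul continuous_const))
  · rintro y ⟨hys, hy⟩
    -- `y` is a limit of points of the open segment `(y, z)`, which lies in the open cell
    refine closure_mono ?_ (segment_subset_closure_openSegment (left_mem_segment ℝ y z))
    rintro _ ⟨a, b, ha, hb, hab, rfl⟩
    refine ⟨hs.openSegment_subset hys hz.1 ⟨a, b, ha, hb, hab, rfl⟩, fun i => ?_⟩
    have := Convex.combo_affine_apply hab (f := (f i).toAffineMap) (x := y) (y := z)
    simp only [ContinuousAffineMap.coe_toAffineMap, smul_eq_mul] at this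
    rw [this]
    nlinarith [hy i, mul_self_pos.2 (hz.2 i)]

end AffineComplement

namespace Lamination

open SignType

section Circle

lemma rep_mem_Ico (x : 𝕋) : rep x ∈ Set.Ico (0 : ℝ) 1 := by
  simpa [rep] using (AddCircle.equivIco 1 0 x).2

lemma rep_nonneg (x : 𝕋) : 0 ≤ rep x := (rep_mem_Ico x).1

lemma rep_lt_one (x : 𝕋) : rep x < 1 := (rep_mem_Ico x).2

@[simp]
lemma coe_rep (x : 𝕋) : ((rep x : ℝ) : 𝕋) = x := (AddCircle.equivIco 1 0).symm_apply_apply x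

lemma rep_coe_of_mem {t : ℝ} (h0 : 0 ≤ t) (h1 : t < 1) : rep (t : 𝕋) = t := by
  simp [rep, AddCircle.equivIco_coe_eq (p := (1 : ℝ)) (a := 0) ⟨h0, by simpa using h1⟩]

lemma rep_injective : Function.Injective rep := fun x y h => by
  rw [← coe_rep x, h, coe_rep]

lemma coe_add_one (t : ℝ) : ((t + 1 : ℝ) : 𝕋) = t := AddCircle.coe_add_period 1 t

lemma coe_sub_one (t : ℝ) : ((t - 1 : ℝ) : 𝕋) = t := by
  rw [← coe_add_one (t - 1), sub_add_cancel]

lemma dbl_coe (t : ℝ) : dbl (t : 𝕋) = ((2 * t : ℝ) : 𝕋) := by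
  rw [dbl, ← AddCircle.coe_add, two_mul]

lemma dbl_eq (x : 𝕋) : dbl x = ((2 * rep x : ℝ) : 𝕋) := by
  rw [← dbl_coe, coe_rep]

lemma rep_dbl_of_lt {x : 𝕋} (h : rep x < 1 / 2) : rep (dbl x) = 2 * rep x := by
  rw [dbl_eq, rep_coe_of_mem (by linarith [rep_nonneg x]) (by linarith)]

lemma rep_dbl_of_ge {x : 𝕋} (h : 1 / 2 ≤ rep x) : rep (dbl x) = 2 * rep x - 1 := by
  rw [dbl_eq, ← coe_sub_one (2 * rep x),
    rep_coe_of_mem (by linarith) (by linarith [rep_lt_one x])]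

lemma rep_dbl (x : 𝕋) : rep (dbl x) = 2 * rep x ∨ rep (dbl x) = 2 * rep x - 1 := by
  rcases lt_or_ge (rep x) (1 / 2) with h | h
  exacts [Or.inl (rep_dbl_of_lt h), Or.inr (rep_dbl_of_ge h)]

end Circle

section Arcs

variable {α x : 𝕋}

lemma mem_image_coe_add_iff {c : ℝ} {S : Set ℝ} (hS : ∀ t ∈ S, 0 ≤ c + t ∧ c + t < 2) :
    x ∈ (fun t : ℝ => ((c + t : ℝ) : 𝕋)) '' S ↔ rep x - c ∈ S ∨ rep x + 1 - c ∈ S := by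
  constructor
  · rintro ⟨t, ht, rfl⟩
    dsimp only
    rcases lt_or_ge (c + t) 1 with h | h
    · left; rwa [rep_coe_of_mem (hS t ht).1 h, add_sub_cancel_left]
    · right
      rwa [← coe_sub_one, rep_coe_of_mem (by linarith) (by linarith [hS t ht]),
        show c + t - 1 + 1 - c = t by ring]
  · rintro (h | h)
    · exact ⟨_, h, by simp⟩
    · exact ⟨_, h, by simp⟩

lemma mem_arcL_iff : x ∈ arcL α ↔ rep α / 2 ≤ rep x ∧ rep x ≤ rep α / 2 + 1 / 2 := by
  have := rep_nonneg α; have := rep_lt_one α; have := rep_nonneg x; have := rep_lt_one x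
  rw [arcL, mem_image_coe_add_iff fun t ht => ⟨by linarith [ht.1], by linarith [ht.2]⟩]
  simp only [Set.mem_Icc]
  refine ⟨fun h => ?_, fun h => Or.inl ⟨by linarith, by linarith⟩⟩
  rcases h with h | h <;> constructor <;> linarith

lemma mem_openArcL_iff : x ∈ openArcL α ↔ rep α / 2 < rep x ∧ rep x < rep α / 2 + 1 / 2 := by
  have := rep_nonneg α; have := rep_lt_one α; have := rep_nonneg x; have := rep_lt_one x
  rw [openArcL, mem_image_coe_add_iff fun t ht => ⟨by linarith [ht.1], by linarith [ht.2]⟩]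
  simp only [Set.mem_Ioo]
  refine ⟨fun h => ?_, fun h => Or.inl ⟨by linarith, by linarith⟩⟩
  rcases h with h | h <;> constructor <;> linarith

lemma mem_arcR_iff : x ∈ arcR α ↔ rep x ≤ rep α / 2 ∨ rep α / 2 + 1 / 2 ≤ rep x := by
  have := rep_nonneg α; have := rep_lt_one α; have := rep_nonneg x; have := rep_lt_one x
  rw [arcR, mem_image_coe_add_iff fun t ht => ⟨by linarith [ht.1], by linarith [ht.2]⟩]
  simp only [Set.mem_Icc]
  constructor
  · rintro (h | h)
    exacts [Or.inr (by linarith), Or.inl (by linarith)]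
  · rintro (h | h)
    exacts [Or.inr ⟨by linarith, by linarith⟩, Or.inl ⟨by linarith, by linarith⟩]

lemma mem_openArcR_iff : x ∈ openArcR α ↔ rep x < rep α / 2 ∨ rep α / 2 + 1 / 2 < rep x := by
  have := rep_nonneg α; have := rep_lt_one α; have := rep_nonneg x; have := rep_lt_one x
  rw [openArcR, mem_image_coe_add_iff fun t ht => ⟨by linarith [ht.1], by linarith [ht.2]⟩]
  simp only [Set.mem_Ioo]
  constructor
  · rintro (h | h)
    exacts [Or.inr (by linarith), Or.inl (by linarith)]
  · rintro (h | h)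
    exacts [Or.inr ⟨by linarith, by linarith⟩, Or.inl ⟨by linarith, by linarith⟩]

end Arcs

section Semicircles

def letterOf (b : Bool) : Letter := if b then Letter.L else Letter.R

def arcB (α : 𝕋) (b : Bool) : Set 𝕋 := if b then arcL α else arcR α

def openArcB (α : 𝕋) (b : Bool) : Set 𝕋 := if b then openArcL α else openArcR α

lemma semi_letterOf (α : 𝕋) (b : Bool) : semi α (letterOf b) = arcB α b := by
  cases b <;> rfl

def IsStar (α x : 𝕋) : Prop := x = star1 α ∨ x = star2 α

variable {α x : 𝕋}

lemma rep_star1 : rep (star1 α) = rep α / 2 :=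
  rep_coe_of_mem (by linarith [rep_nonneg α]) (by linarith [rep_lt_one α])

lemma rep_star2 : rep (star2 α) = rep α / 2 + 1 / 2 :=
  rep_coe_of_mem (by linarith [rep_nonneg α]) (by linarith [rep_lt_one α])

lemma star1_ne_star2 : star1 α ≠ star2 α := fun h => by
  have := congrArg rep h
  rw [rep_star1, rep_star2] at this
  linarith

lemma isStar_iff_dbl_eq : IsStar α x ↔ dbl x = α := by
  constructor
  · rintro (rfl | rfl)
    · rw [star1, dbl_coe, mul_div_cancel₀ _ two_ne_zero, coe_rep]
    · rw [star2, dbl_coe, show 2 * (rep α / 2 + 1 / 2) = rep α + 1 by ring, coe_add_one, coe_rep]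
  · intro h
    have hrep := congrArg rep h
    rcases lt_or_ge (rep x) (1 / 2) with hx | hx
    · rw [rep_dbl_of_lt hx] at hrep
      exact Or.inl (rep_injective (by rw [rep_star1]; linarith))
    · rw [rep_dbl_of_ge hx] at hrep
      exact Or.inr (rep_injective (by rw [rep_star2]; linarith))

lemma isStar_star1 : IsStar α (star1 α) := Or.inl rfl

lemma isStar_star2 : IsStar α (star2 α) := Or.inr rfl

lemma rep_of_isStar (hx : IsStar α x) : rep x = rep α / 2 ∨ rep x = rep α / 2 + 1 / 2 := by
  rcases hx with rfl | rfl
  exacts [Or.inl rep_star1, Or.inr rep_star2]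

lemma IsStar.notMem_openArcB (hx : IsStar α x) (b : Bool) : x ∉ openArcB α b := by
  cases b
  · simp only [openArcB, Bool.false_eq_true, if_false, mem_openArcR_iff]
    rcases rep_of_isStar hx with h | h <;> rw [h] <;> simp
  · simp only [openArcB, if_true, mem_openArcL_iff]
    rcases rep_of_isStar hx with h | h <;> rw [h] <;> simp

lemma openArcB_subset_arcB (b : Bool) : openArcB α b ⊆ arcB α b := by
  intro x h
  cases b
  · simp only [openArcB, arcB, Bool.false_eq_true, if_false, mem_openArcR_iff,
      mem_arcR_iff] at h ⊢
    exact h.imp le_of_lt le_of_lt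
  · simp only [openArcB, arcB, if_true, mem_openArcL_iff, mem_arcL_iff] at h ⊢
    exact h.imp le_of_lt le_of_lt

lemma notMem_arcB_of_mem_openArcB_not {b : Bool} (h : x ∈ openArcB α !b) : x ∉ arcB α b := by
  cases b
  · simp only [openArcB, arcB, Bool.not_false, Bool.false_eq_true, if_true, if_false,
      mem_openArcL_iff, mem_arcR_iff] at h ⊢
    intro h'; rcases h' with h' | h' <;> linarith [h.1, h.2]
  · simp only [openArcB, arcB, Bool.not_true, Bool.false_eq_true, if_true, if_false,
      mem_openArcR_iff, mem_arcL_iff] at h ⊢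
    intro h'; rcases h with h | h <;> linarith [h'.1, h'.2]

lemma notMem_openArcB_of_mem_openArcB_not {b : Bool} (h : x ∈ openArcB α !b) :
    x ∉ openArcB α b :=
  fun h' => notMem_arcB_of_mem_openArcB_not h (openArcB_subset_arcB b h')

lemma mem_openArcB_or (b : Bool) (x : 𝕋) :
    x ∈ openArcB α b ∨ x ∈ openArcB α !b ∨ IsStar α x := by
  suffices x ∈ openArcL α ∨ x ∈ openArcR α ∨ IsStar α x by
    cases b <;> simp only [openArcB, Bool.not_false, Bool.not_true, Bool.false_eq_true,
      if_true, if_false] <;> tauto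
  rw [mem_openArcL_iff, mem_openArcR_iff]
  rcases lt_trichotomy (rep x) (rep α / 2) with h | h | h
  · exact Or.inr (Or.inl (Or.inl h))
  · exact Or.inr (Or.inr (Or.inl (rep_injective (by rw [h, rep_star1]))))
  rcases lt_trichotomy (rep x) (rep α / 2 + 1 / 2) with h' | h' | h'
  · exact Or.inl ⟨h, h'⟩
  · exact Or.inr (Or.inr (Or.inr (rep_injective (by rw [h', rep_star2]))))
  · exact Or.inr (Or.inl (Or.inr h'))

end Semicircles

section Branches

variable {α x : 𝕋}

lemma rep_half (x : 𝕋) : rep ((rep x / 2 : ℝ) : 𝕋) = rep x / 2 :=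
  rep_coe_of_mem (by linarith [rep_nonneg x]) (by linarith [rep_lt_one x])

lemma rep_half_add_half (x : 𝕋) : rep ((rep x / 2 + 1 / 2 : ℝ) : 𝕋) = rep x / 2 + 1 / 2 :=
  rep_coe_of_mem (by linarith [rep_nonneg x]) (by linarith [rep_lt_one x])

lemma rep_tldL_of_lt (h : rep α < rep x) : rep (tldL α x) = rep x / 2 := by
  have hmem : ((rep x / 2 : ℝ) : 𝕋) ∈ openArcL α := by
    rw [mem_openArcL_iff, rep_half]; constructor <;> linarith [rep_lt_one x, rep_nonneg α]
  rw [tldL, if_pos hmem, rep_half]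

lemma rep_tldL_of_le (h : rep x ≤ rep α) : rep (tldL α x) = rep x / 2 + 1 / 2 := by
  have hmem : ((rep x / 2 : ℝ) : 𝕋) ∉ openArcL α := by
    rw [mem_openArcL_iff, rep_half]; intro h'; linarith [h'.1]
  rw [tldL, if_neg hmem, rep_half_add_half]

lemma rep_tldR_of_lt (h : rep x < rep α) : rep (tldR α x) = rep x / 2 := by
  have hmem : ((rep x / 2 : ℝ) : 𝕋) ∈ openArcR α := by
    rw [mem_openArcR_iff, rep_half]; left; linarith
  rw [tldR, if_pos hmem, rep_half]

lemma rep_tldR_of_le (h : rep α ≤ rep x) : rep (tldR α x) = rep x / 2 + 1 / 2 := by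
  have hmem : ((rep x / 2 : ℝ) : 𝕋) ∉ openArcR α := by
    rw [mem_openArcR_iff, rep_half]; rintro (h' | h') <;> linarith [rep_lt_one x, rep_nonneg α]
  rw [tldR, if_neg hmem, rep_half_add_half]

lemma rep_tldB (b : Bool) (x : 𝕋) :
    rep (tldB α b x) = rep x / 2 ∨ rep (tldB α b x) = rep x / 2 + 1 / 2 := by
  cases b <;> simp only [tldB, Bool.false_eq_true, if_true, if_false]
  · rcases lt_or_ge (rep x) (rep α) with h | h
    exacts [Or.inl (rep_tldR_of_lt h), Or.inr (rep_tldR_of_le h)]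
  · rcases lt_or_ge (rep α) (rep x) with h | h
    exacts [Or.inl (rep_tldL_of_lt h), Or.inr (rep_tldL_of_le h)]

lemma dbl_tldB (b : Bool) (x : 𝕋) : dbl (tldB α b x) = x := by
  rw [dbl_eq]
  rcases rep_tldB b x with h | h <;> rw [h]
  · rw [mul_div_cancel₀ _ two_ne_zero, coe_rep]
  · rw [show 2 * (rep x / 2 + 1 / 2) = rep x + 1 by ring, coe_add_one, coe_rep]

lemma tldB_mem_openArcB (b : Bool) (hx : x ≠ α) : tldB α b x ∈ openArcB α b := by
  have hne : rep x ≠ rep α := fun h => hx (rep_injective h)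
  have := rep_nonneg x; have := rep_lt_one x; have := rep_nonneg α; have := rep_lt_one α
  cases b <;> simp only [tldB, openArcB, Bool.false_eq_true, if_true, if_false]
  · rw [mem_openArcR_iff]
    rcases hne.lt_or_gt with h | h
    · rw [rep_tldR_of_lt h]; left; linarith
    · rw [rep_tldR_of_le h.le]; right; linarith
  · rw [mem_openArcL_iff]
    rcases hne.lt_or_gt with h | h
    · rw [rep_tldL_of_le h.le]; constructor <;> linarith
    · rw [rep_tldL_of_lt h]; constructor <;> linarith

lemma injOn_dbl_openArcB (b : Bool) : Set.InjOn dbl (openArcB α b) := by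
  -- `dbl` only identifies antipodal points, and no open semicircle contains two of them
  intro u hu v hv h
  have h' := congrArg rep h
  apply rep_injective
  cases b <;> simp only [openArcB, Bool.false_eq_true, if_true, if_false, mem_openArcL_iff,
    mem_openArcR_iff] at hu hv <;>
  rcases rep_dbl u with hu' | hu' <;> rcases rep_dbl v with hv' | hv' <;>
  rw [hu', hv'] at h' <;> try linarith
  all_goals rcases hu with hu | hu <;> rcases hv with hv | hv <;>
    linarith [rep_nonneg u, rep_nonneg v, rep_lt_one u, rep_lt_one v, rep_nonneg α, rep_lt_one α]

lemma tldB_dbl {b : Bool} (hx : x ∈ openArcB α b) : tldB α b (dbl x) = x :=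
  injOn_dbl_openArcB b
    (tldB_mem_openArcB b fun h => (isStar_iff_dbl_eq.2 h).notMem_openArcB b hx) hx
    (dbl_tldB b (dbl x))

end Branches

section Words

variable {α : 𝕋}

lemma wtld_cons (b : Bool) (g : List Bool) (x : 𝕋) :
    wtld α (b :: g) x = tldB α b (wtld α g x) := rfl

lemma iterate_dbl_wtld (g : List Bool) (x : 𝕋) {k : ℕ} (hk : k ≤ g.length) :
    dbl^[k] (wtld α g x) = wtld α (g.drop k) x := by
  induction g generalizing k with
  | nil => rw [Nat.le_zero.1 hk]; rfl
  | cons b g ih =>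
    cases k with
    | zero => rfl
    | succ k =>
      rw [wtld_cons, Function.iterate_succ_apply, dbl_tldB, ih (by simpa using hk),
        List.drop_succ_cons]

lemma iterate_length_dbl_wtld (g : List Bool) (x : 𝕋) : dbl^[g.length] (wtld α g x) = x := by
  rw [iterate_dbl_wtld g x le_rfl, List.drop_length]; rfl

lemma wtld_star1_ne_star2 (g : List Bool) : wtld α g (star1 α) ≠ wtld α g (star2 α) :=
  fun h => star1_ne_star2 (by
    simpa only [iterate_length_dbl_wtld] using congrArg (dbl^[g.length]) h)

lemma IsStar.iterate_dbl_wtld_eq {s : 𝕋} (hs : IsStar α s) (g : List Bool) :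
    dbl^[g.length + 1] (wtld α g s) = α := by
  rw [Function.iterate_succ_apply', iterate_length_dbl_wtld, ← isStar_iff_dbl_eq.1 hs]

variable (hα : ¬ Periodic' α)
include hα

lemma dbl_ne_self_of_not_periodic : dbl α ≠ α :=
  fun h => hα ⟨1, le_rfl, h⟩

lemma rep_pos_of_not_periodic : 0 < rep α := by
  refine (rep_nonneg α).lt_of_ne fun h => hα ⟨1, le_rfl, ?_⟩
  rw [← coe_rep α, ← h, Function.iterate_one, dbl_coe, mul_zero]

lemma IsStar.wtld_ne_alpha {s : 𝕋} (hs : IsStar α s) (g : List Bool) : wtld α g s ≠ α :=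
  fun h => hα ⟨g.length + 1, by omega,
    (congrArg dbl^[g.length + 1] h).symm.trans (hs.iterate_dbl_wtld_eq g)⟩

lemma IsStar.iterate_dbl_wtld_mem_openArcB {s : 𝕋} (hs : IsStar α s) (g : List Bool) {i : ℕ}
    (hi : i < g.length) : dbl^[i] (wtld α g s) ∈ openArcB α (g.getD i true) := by
  rw [iterate_dbl_wtld g s hi.le, List.drop_eq_getElem_cons hi, wtld_cons,
    List.getD_eq_getElem g true hi]
  exact tldB_mem_openArcB _ (hs.wtld_ne_alpha hα _)

lemma IsStar.wtld_ne_wtld {s s' : 𝕋} (hs : IsStar α s) (hs' : IsStar α s') {g w : List Bool}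
    (hlen : g.length = w.length + 1) : wtld α g s ≠ wtld α w s' := fun h => by
  -- applying `dbl` `|g| + 1` times to both sides would give `α = dbl α`
  have := congrArg dbl^[g.length + 1] h
  rw [hs.iterate_dbl_wtld_eq, hlen, Function.iterate_succ_apply', hs'.iterate_dbl_wtld_eq] at this
  exact dbl_ne_self_of_not_periodic hα this.symm

end Words

section Sides

/-- The lift of `x` to `[c, c + 1)`, for `0 ≤ c < 1`. -/
noncomputable def liftIco (c : ℝ) (x : 𝕋) : ℝ := if rep x < c then rep x + 1 else rep x

noncomputable def cutSign (c : ℝ) (x : 𝕋) : SignType := if rep x < c then -1 else 1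

lemma cutSign_mul_self (c : ℝ) (x : 𝕋) : cutSign c x * cutSign c x = 1 := by
  unfold cutSign; split_ifs <;> rfl

lemma sign_liftIco_sub (c : ℝ) (x y : 𝕋) :
    sign (liftIco c x - liftIco c y) = cutSign c x * cutSign c y * sign (rep x - rep y) := by
  have := rep_nonneg x; have := rep_lt_one x; have := rep_nonneg y; have := rep_lt_one y
  unfold liftIco cutSign
  split_ifs with h₁ h₂ h₂
  · simp
  · rw [sign_pos (by linarith), sign_neg (by linarith)]; rfl
  · rw [sign_neg (by linarith), sign_pos (by linarith)]; rfl
  · simp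

/-- `chordPow φ p q x` is negative exactly when, in the coordinate `φ`, the point `x` lies
strictly between `p` and `q`. -/
def chordPow (φ : 𝕋 → ℝ) (p q x : 𝕋) : ℝ := (φ x - φ p) * (φ x - φ q)

lemma sign_chordPow_liftIco (c : ℝ) (p q x : 𝕋) :
    sign (chordPow (liftIco c) p q x) =
      cutSign c p * cutSign c q * sign (chordPow rep p q x) := by
  simp only [chordPow, sign_mul, sign_liftIco_sub]
  calc _ = cutSign c x * cutSign c x * (cutSign c p * cutSign c q *
        (sign (rep x - rep p) * sign (rep x - rep q))) := by ac_rfl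
    _ = _ := by rw [cutSign_mul_self, one_mul, mul_assoc]

/-- `x` and `y` are not strictly separated by the chord joining `p` and `q`. -/
def WSameSide (p q x y : 𝕋) : Prop := 0 ≤ chordPow rep p q x * chordPow rep p q y

lemma wSameSide_comm {p q x y : 𝕋} : WSameSide p q x y ↔ WSameSide p q y x := by
  rw [WSameSide, WSameSide, mul_comm]

/-- Separation by a chord does not depend on where the circle is cut open. -/
lemma wSameSide_iff_liftIco (c : ℝ) {p q x y : 𝕋} :
    WSameSide p q x y ↔ 0 ≤ chordPow (liftIco c) p q x * chordPow (liftIco c) p q y := by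
  rw [WSameSide, ← sign_nonneg_iff, ← sign_nonneg_iff (a := _ * _), sign_mul, sign_mul,
    sign_chordPow_liftIco, sign_chordPow_liftIco, mul_mul_mul_comm]
  have : cutSign c p * cutSign c q * (cutSign c p * cutSign c q) = 1 :=
    calc _ = cutSign c p * cutSign c p * (cutSign c q * cutSign c q) := by ac_rfl
      _ = 1 := by rw [cutSign_mul_self, cutSign_mul_self, one_mul]
  rw [this, one_mul]

end Sides

section Pullback

variable {α p q x y : 𝕋}

lemma liftIco_mem_Ioo (hx : x ≠ α) : rep α < liftIco (rep α) x ∧ liftIco (rep α) x < rep α + 1 := by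
  have hne : rep x ≠ rep α := fun h => hx (rep_injective h)
  have := rep_nonneg x; have := rep_lt_one x; have := rep_nonneg α; have := rep_lt_one α
  unfold liftIco
  split_ifs with h
  · constructor <;> linarith
  · constructor <;> [exact lt_of_le_of_ne (not_lt.1 h) hne.symm; linarith]

lemma liftIco_injective (c : ℝ) : Function.Injective (liftIco c) := fun x y h => by
  have := rep_nonneg x; have := rep_lt_one x; have := rep_nonneg y; have := rep_lt_one y
  unfold liftIco at h
  exact rep_injective (by split_ifs at h <;> linarith)

lemma liftIco_rep_self (x : 𝕋) : liftIco (rep x) x = rep x := if_neg (lt_irrefl _)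

lemma liftIco_tldB (b : Bool) (hx : x ≠ α) :
    liftIco (rep α / 2) (tldB α b x) = liftIco (rep α) x / 2 + if b then 0 else 1 / 2 := by
  have hne : rep x ≠ rep α := fun h => hx (rep_injective h)
  have := rep_nonneg x; have := rep_lt_one x; have := rep_nonneg α; have := rep_lt_one α
  unfold liftIco
  cases b <;> simp only [tldB, Bool.false_eq_true, if_true, if_false] <;>
    rcases hne.lt_or_gt with h | h
  · rw [rep_tldR_of_lt h, if_pos (by linarith), if_pos h]; ring
  · rw [rep_tldR_of_le h.le, if_neg (by linarith), if_neg (not_lt.2 h.le)]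
  · rw [rep_tldL_of_le h.le, if_neg (by linarith), if_pos h]; ring
  · rw [rep_tldL_of_lt h, if_neg (by linarith), if_neg (not_lt.2 h.le)]; ring

lemma liftIco_of_mem_openArcB {b : Bool} (hx : x ∈ openArcB α b) :
    liftIco (rep α / 2) x = liftIco (rep α) (dbl x) / 2 + if b then 0 else 1 / 2 := by
  conv_lhs => rw [← tldB_dbl hx]
  exact liftIco_tldB b fun h => (isStar_iff_dbl_eq.2 h).notMem_openArcB b hx

lemma chordPow_tldB_of_mem {b : Bool} (hp : p ≠ α) (hq : q ≠ α) (hx : x ∈ openArcB α b) :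
    chordPow (liftIco (rep α / 2)) (tldB α b p) (tldB α b q) x =
      chordPow (liftIco (rep α)) p q (dbl x) / 4 := by
  simp only [chordPow, liftIco_of_mem_openArcB hx, liftIco_tldB b hp, liftIco_tldB b hq]
  ring

lemma chordPow_tldB_pos_of_notMem {b : Bool} (hp : p ≠ α) (hq : q ≠ α)
    (hx : x ∉ openArcB α b) : 0 < chordPow (liftIco (rep α / 2)) (tldB α b p) (tldB α b q) x := by
  have := rep_nonneg x; have := rep_lt_one x; have := rep_nonneg α; have := rep_lt_one α
  have hp' := liftIco_mem_Ioo hp; have hq' := liftIco_mem_Ioo hq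
  simp only [chordPow, liftIco_tldB b hp, liftIco_tldB b hq]
  generalize liftIco (rep α) p = P at hp' ⊢
  generalize liftIco (rep α) q = Q at hq' ⊢
  unfold liftIco
  cases b <;> simp only [openArcB, Bool.false_eq_true, if_true, if_false, mem_openArcL_iff,
    mem_openArcR_iff, not_or, not_and_or, not_lt] at hx ⊢
  · split_ifs <;> exact mul_pos_of_neg_of_neg (by linarith) (by linarith)
  · split_ifs
    · exact mul_pos (by linarith) (by linarith)
    · rcases hx with hx | hx
      · exact mul_pos_of_neg_of_neg (by linarith) (by linarith)
      · exact mul_pos (by linarith) (by linarith)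

lemma chordPow_alpha_pos (hp : p ≠ α) (hq : q ≠ α) : 0 < chordPow (liftIco (rep α)) p q α := by
  have hp' := liftIco_mem_Ioo hp; have hq' := liftIco_mem_Ioo hq
  rw [chordPow, liftIco_rep_self]
  exact mul_pos_of_neg_of_neg (by linarith) (by linarith)

lemma wSameSide_tldB_of_mem {b : Bool} (hp : p ≠ α) (hq : q ≠ α) (hx : x ∈ openArcB α b)
    (hy : y ∈ openArcB α b) :
    WSameSide (tldB α b p) (tldB α b q) x y ↔ WSameSide p q (dbl x) (dbl y) := by
  rw [wSameSide_iff_liftIco (rep α / 2), chordPow_tldB_of_mem hp hq hx,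
    chordPow_tldB_of_mem hp hq hy, wSameSide_iff_liftIco (rep α), div_mul_div_comm,
    le_div_iff₀ (by norm_num), zero_mul]

lemma wSameSide_tldB_of_notMem {b : Bool} (hp : p ≠ α) (hq : q ≠ α) (hx : x ∉ openArcB α b) :
    WSameSide (tldB α b p) (tldB α b q) x y ↔ (y ∈ openArcB α b → WSameSide p q α (dbl y)) := by
  rw [wSameSide_iff_liftIco (rep α / 2),
    mul_nonneg_iff_of_pos_left (chordPow_tldB_pos_of_notMem hp hq hx)]
  by_cases hy : y ∈ openArcB α b
  · rw [chordPow_tldB_of_mem hp hq hy, wSameSide_iff_liftIco (rep α),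
      mul_nonneg_iff_of_pos_left (chordPow_alpha_pos hp hq), le_div_iff₀ (by norm_num), zero_mul]
    exact ⟨fun h _ => h, fun h => h hy⟩
  · exact iff_of_true (chordPow_tldB_pos_of_notMem hp hq hy).le fun h => absurd h hy

end Pullback

section Cell

variable {α : 𝕋}

def cell (α : 𝕋) (g : List Bool) : Set 𝕋 :=
  {x | ∀ w : List Bool, w.length = g.length - 1 →
    WSameSide (wtld α w (star1 α)) (wtld α w (star2 α)) (wtld α g (star1 α)) x}

lemma mem_cell_cons {b : Bool} {g : List Bool} (hg : g ≠ []) {x : 𝕋} :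
    x ∈ cell α (b :: g) ↔ ∀ (c : Bool) (w : List Bool), w.length = g.length - 1 →
      WSameSide (tldB α c (wtld α w (star1 α))) (tldB α c (wtld α w (star2 α)))
        (wtld α (b :: g) (star1 α)) x := by
  have : g.length ≠ 0 := by simpa using hg
  refine ⟨fun h c w hw => h (c :: w) (by simp; omega), fun h w hw => ?_⟩
  obtain ⟨c, w, rfl⟩ : ∃ c w', w = c :: w' := List.exists_cons_of_ne_nil (by
    rintro rfl; simp at hw; omega)
  exact h c w (by simp at hw; omega)

variable (hα : ¬ Periodic' α) {b : Bool} {g : List Bool}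
include hα

lemma mem_cell_cons_of_mem_openArcB (hg : g ≠ []) {x : 𝕋} (hx : x ∈ openArcB α b) :
    x ∈ cell α (b :: g) ↔ dbl x ∈ cell α g := by
  have hz := tldB_mem_openArcB b (isStar_star1.wtld_ne_alpha hα g)
  rw [mem_cell_cons hg, wtld_cons]
  constructor
  · intro h w hw
    have := h b w hw
    rwa [wSameSide_tldB_of_mem (isStar_star1.wtld_ne_alpha hα w)
      (isStar_star2.wtld_ne_alpha hα w) hz hx, dbl_tldB] at this
  · intro h c w hw
    have hP := isStar_star1.wtld_ne_alpha hα w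
    have hQ := isStar_star2.wtld_ne_alpha hα w
    rcases Bool.eq_or_eq_not c b with rfl | rfl
    · rw [wSameSide_tldB_of_mem hP hQ hz hx, dbl_tldB]
      exact h w hw
    · rw [wSameSide_tldB_of_notMem hP hQ (notMem_openArcB_of_mem_openArcB_not (by simpa))]
      exact fun hx' => absurd hx (notMem_openArcB_of_mem_openArcB_not (by simpa))

lemma mem_cell_cons_of_isStar (hg : g ≠ []) {x : 𝕋} (hx : IsStar α x) :
    x ∈ cell α (b :: g) ↔ α ∈ cell α g := by
  have hz := tldB_mem_openArcB b (isStar_star1.wtld_ne_alpha hα g)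
  rw [mem_cell_cons hg, wtld_cons]
  constructor
  · intro h w hw
    have := h b w hw
    rwa [wSameSide_comm, wSameSide_tldB_of_notMem (isStar_star1.wtld_ne_alpha hα w)
      (isStar_star2.wtld_ne_alpha hα w) (hx.notMem_openArcB b), dbl_tldB, wSameSide_comm,
      imp_iff_right hz] at this
  · intro h c w hw
    have hP := isStar_star1.wtld_ne_alpha hα w
    have hQ := isStar_star2.wtld_ne_alpha hα w
    rcases Bool.eq_or_eq_not c b with rfl | rfl
    · rw [wSameSide_comm, wSameSide_tldB_of_notMem hP hQ (hx.notMem_openArcB c), dbl_tldB,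
        wSameSide_comm]
      exact fun _ => h w hw
    · rw [wSameSide_tldB_of_notMem hP hQ (notMem_openArcB_of_mem_openArcB_not (by simpa))]
      exact fun hx' => absurd hx' (hx.notMem_openArcB _)

lemma mem_cell_cons_of_mem_openArcB_not (hg : g ≠ []) {x : 𝕋} (hx : x ∈ openArcB α !b) :
    x ∈ cell α (b :: g) ↔ α ∈ cell α g ∧ ∀ w : List Bool, w.length = g.length - 1 →
      WSameSide (wtld α w (star1 α)) (wtld α w (star2 α)) α (dbl x) := by
  have hz := tldB_mem_openArcB b (isStar_star1.wtld_ne_alpha hα g)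
  have hzb : tldB α b (wtld α g (star1 α)) ∉ openArcB α !b :=
    notMem_openArcB_of_mem_openArcB_not (by simpa)
  have hxb := notMem_openArcB_of_mem_openArcB_not hx
  rw [mem_cell_cons hg, wtld_cons]
  constructor
  · intro h
    refine ⟨fun w hw => ?_, fun w hw => ?_⟩
    · have := h b w hw
      rwa [wSameSide_comm, wSameSide_tldB_of_notMem (isStar_star1.wtld_ne_alpha hα w)
        (isStar_star2.wtld_ne_alpha hα w) hxb, dbl_tldB, wSameSide_comm,
        imp_iff_right hz] at this
    · have := h (!b) w hw
      rwa [wSameSide_tldB_of_notMem (isStar_star1.wtld_ne_alpha hα w)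
        (isStar_star2.wtld_ne_alpha hα w) hzb, imp_iff_right hx] at this
  · rintro ⟨hA, h⟩ c w hw
    have hP := isStar_star1.wtld_ne_alpha hα w
    have hQ := isStar_star2.wtld_ne_alpha hα w
    rcases Bool.eq_or_eq_not c b with rfl | rfl
    · rw [wSameSide_comm, wSameSide_tldB_of_notMem hP hQ hxb, dbl_tldB, wSameSide_comm]
      exact fun _ => hA w hw
    · rw [wSameSide_tldB_of_notMem hP hQ hzb]
      exact fun _ => h w hw

lemma mem_cell_iff_of_alpha_mem (hg : g ≠ []) (hA : α ∈ cell α g) {v : 𝕋} :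
    v ∈ cell α g ↔ ∀ w : List Bool, w.length = g.length - 1 →
      WSameSide (wtld α w (star1 α)) (wtld α w (star2 α)) α v := by
  have : g.length ≠ 0 := by simpa using hg
  refine forall₂_congr fun w hw => ?_
  have hP := isStar_star1.wtld_ne_alpha hα w
  have hQ := isStar_star2.wtld_ne_alpha hα w
  have hzP := isStar_star1.wtld_ne_wtld hα isStar_star1 (g := g) (w := w) (by omega)
  have hzQ := isStar_star1.wtld_ne_wtld hα isStar_star2 (g := g) (w := w) (by omega)
  -- `g̃(⋆₁)` is on no chord, so `α ∈ cell α g` puts it strictly on `α`'s side of each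
  have hz : chordPow (liftIco (rep α)) (wtld α w (star1 α)) (wtld α w (star2 α))
      (wtld α g (star1 α)) ≠ 0 :=
    mul_ne_zero (sub_ne_zero.2 ((liftIco_injective _).ne hzP))
      (sub_ne_zero.2 ((liftIco_injective _).ne hzQ))
  have hAw := hA w hw
  rw [wSameSide_iff_liftIco (rep α), mul_nonneg_iff_of_pos_right (chordPow_alpha_pos hP hQ)]
    at hAw
  rw [wSameSide_iff_liftIco (rep α), wSameSide_iff_liftIco (rep α),
    mul_nonneg_iff_of_pos_left (chordPow_alpha_pos hP hQ)]
  exact mul_nonneg_iff_of_pos_left (hAw.lt_of_ne' hz)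

lemma wSameSide_star_tldB_star1_iff (b : Bool) (x : 𝕋) :
    WSameSide (star1 α) (star2 α) (tldB α b (star1 α)) x ↔ x ∈ arcB α b := by
  have ha := rep_pos_of_not_periodic hα
  have := rep_lt_one α
  rw [WSameSide, chordPow, chordPow, rep_star1, rep_star2]
  cases b <;> simp only [tldB, arcB, Bool.false_eq_true, if_true, if_false, mem_arcL_iff,
    mem_arcR_iff]
  · rw [rep_tldR_of_lt (by rw [rep_star1]; linarith), rep_star1,
      mul_nonneg_iff_of_pos_left (mul_pos_of_neg_of_neg (by linarith) (by linarith))]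
    constructor
    · intro h; by_contra! h'; nlinarith [h'.1, h'.2]
    · rintro (h | h) <;> nlinarith
  · rw [rep_tldL_of_le (by rw [rep_star1]; linarith), rep_star1, ← neg_mul_neg,
      mul_nonneg_iff_of_pos_left (neg_pos.2 (mul_neg_of_pos_of_neg (by linarith) (by linarith))),
      neg_nonneg]
    constructor
    · intro h; constructor <;> by_contra! h' <;> nlinarith
    · rintro ⟨h1, h2⟩; nlinarith

end Cell

section Legal

lemma cylSet_nil (α : 𝕋) : cylSet α [] = Set.univ := by
  simp [cylSet]

lemma cylSet_cons (α : 𝕋) (ℓ : Letter) (u : List Letter) :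
    cylSet α (ℓ :: u) = semi α ℓ ∩ dbl ⁻¹' cylSet α u := by
  ext x
  simp only [cylSet, Set.mem_ofPred_eq, Set.mem_inter_iff, Set.mem_preimage, List.length_cons,
    ← Function.iterate_succ_apply]
  constructor
  · exact fun h => ⟨h 0 (Nat.succ_pos _), fun i hi => h (i + 1) (by omega)⟩
  · rintro ⟨h0, h⟩ (_ | i) hi
    exacts [h0, h i (by omega)]

noncomputable def legal (α : 𝕋) : List Bool → List Letter
  | [] => []
  | b :: g => (if g ≠ [] ∧ α ∈ cylSet α (legal α g) then Letter.star else letterOf b) :: legal α g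

variable {α : 𝕋} (hα : ¬ Periodic' α)
include hα

lemma cylSet_legal_singleton (b : Bool) : cylSet α (legal α [b]) = cell α [b] := by
  ext x
  simp only [legal, ne_eq, not_true_eq_false, false_and, if_false, cylSet_cons, cylSet_nil,
    Set.preimage_univ, Set.inter_univ, semi_letterOf, cell, List.length_singleton, Nat.sub_self,
    List.length_eq_zero_iff, forall_eq, Set.mem_ofPred_eq]
  exact (wSameSide_star_tldB_star1_iff hα b x).symm

lemma cylSet_legal_cons {b : Bool} {g : List Bool} (hg : g ≠ [])
    (ih : cylSet α (legal α g) = cell α g) : cylSet α (legal α (b :: g)) = cell α (b :: g) := by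
  by_cases hA : α ∈ cell α g
  · have : legal α (b :: g) = Letter.star :: legal α g := by
      rw [legal, if_pos ⟨hg, ih ▸ hA⟩]
    ext x
    rw [this, cylSet_cons, ih, semi, Set.univ_inter, Set.mem_preimage]
    rcases mem_openArcB_or (α := α) b x with hx | hx | hx
    · exact (mem_cell_cons_of_mem_openArcB hα hg hx).symm
    · rw [mem_cell_cons_of_mem_openArcB_not hα hg hx, mem_cell_iff_of_alpha_mem hα hg hA,
        and_iff_right hA]
    · rw [mem_cell_cons_of_isStar hα hg hx, isStar_iff_dbl_eq.1 hx]
  · have : legal α (b :: g) = letterOf b :: legal α g := by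
      rw [legal, if_neg fun h => hA (ih ▸ h.2)]
    ext x
    rw [this, cylSet_cons, ih, semi_letterOf, Set.mem_inter_iff, Set.mem_preimage]
    rcases mem_openArcB_or (α := α) b x with hx | hx | hx
    · rw [mem_cell_cons_of_mem_openArcB hα hg hx, and_iff_right (openArcB_subset_arcB b hx)]
    · rw [mem_cell_cons_of_mem_openArcB_not hα hg hx]
      exact iff_of_false (fun h => notMem_arcB_of_mem_openArcB_not hx h.1) fun h => hA h.1
    · rw [mem_cell_cons_of_isStar hα hg hx, isStar_iff_dbl_eq.1 hx]
      exact iff_of_false (fun h => hA h.2) hA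

theorem cylSet_legal {g : List Bool} (hg : g ≠ []) : cylSet α (legal α g) = cell α g := by
  induction g with
  | nil => exact absurd rfl hg
  | cons b g ih =>
    rcases eq_or_ne g [] with rfl | hg'
    · exact cylSet_legal_singleton hα b
    · exact cylSet_legal_cons hα hg' (ih hg')

end Legal

section Chords

open Complex ComplexConjugate

lemma emb_eq (x : 𝕋) : emb x = exp (((2 * Real.pi * rep x : ℝ) : ℂ) * I) := by
  rw [emb]; push_cast; ring_nf

@[simp]
lemma norm_emb (x : 𝕋) : ‖emb x‖ = 1 := by
  rw [emb_eq]; exact norm_exp_ofReal_mul_I _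

noncomputable def chordSide (p q : 𝕋) : ℂ →ᴬ[ℝ] ℝ where
  toFun v := (conj (emb q - emb p) * (v - emb p)).im
  linear := imLm.comp (LinearMap.mulLeft ℝ (conj (emb q - emb p)))
  map_vadd' v w := by simp [mul_add, add_sub_assoc]
  cont := by fun_prop

lemma chordSide_apply (p q : 𝕋) (v : ℂ) :
    chordSide p q v = (conj (emb q - emb p) * (v - emb p)).im := rfl

lemma chordSide_emb (p q x : 𝕋) :
    chordSide p q (emb x) = 4 * Real.sin (Real.pi * (rep x - rep p)) *
      Real.sin (Real.pi * (rep x - rep q)) * Real.sin (Real.pi * (rep q - rep p)) := by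
  simp only [chordSide_apply, emb_eq, mul_im, conj_re, conj_im, sub_re, sub_im,
    exp_ofReal_mul_I_re, exp_ofReal_mul_I_im]
  simp only [mul_sub, Real.sin_sub, show ∀ t : ℝ, 2 * Real.pi * t = 2 * (Real.pi * t) by
    intro t; ring, Real.sin_two_mul, Real.cos_two_mul]
  set a := Real.pi * rep x; set b := Real.pi * rep p; set c := Real.pi * rep q
  linear_combination (-(4 : ℝ) * (Real.cos c * Real.cos b ^ 2 * Real.sin c -
      Real.cos c ^ 2 * Real.cos b * Real.sin b)) * Real.sin_sq_add_cos_sq a +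
    (-(4 : ℝ) * (Real.cos c ^ 2 * Real.sin a * Real.cos a -
      Real.cos c * Real.cos a ^ 2 * Real.sin c)) * Real.sin_sq_add_cos_sq b +
    (-(4 : ℝ) * (Real.cos b * Real.cos a ^ 2 * Real.sin b -
      Real.cos b ^ 2 * Real.sin a * Real.cos a)) * Real.sin_sq_add_cos_sq c

lemma sign_sin_pi_mul {t : ℝ} (h₁ : -1 < t) (h₂ : t < 1) :
    sign (Real.sin (Real.pi * t)) = sign t := by
  rcases lt_trichotomy t 0 with h | rfl | h
  · rw [sign_neg h, sign_neg]
    rw [← neg_pos, ← Real.sin_neg]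
    exact Real.sin_pos_of_pos_of_lt_pi (by nlinarith [Real.pi_pos]) (by nlinarith [Real.pi_pos])
  · simp
  · rw [sign_pos h, sign_pos]
    exact Real.sin_pos_of_pos_of_lt_pi (by nlinarith [Real.pi_pos]) (by nlinarith [Real.pi_pos])

lemma sign_chordSide_emb (p q x : 𝕋) :
    sign (chordSide p q (emb x)) = sign (chordPow rep p q x) * sign (rep q - rep p) := by
  have h := fun y z : 𝕋 => sign_sin_pi_mul (t := rep y - rep z)
    (by linarith [rep_nonneg y, rep_lt_one z]) (by linarith [rep_lt_one y, rep_nonneg z])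
  rw [chordSide_emb, chordPow, sign_mul, sign_mul, sign_mul, sign_mul, h, h, h,
    sign_pos (by norm_num : (0 : ℝ) < 4), one_mul]

lemma chordSide_emb_mul_nonneg_iff {p q : 𝕋} (hpq : p ≠ q) (x y : 𝕋) :
    0 ≤ chordSide p q (emb x) * chordSide p q (emb y) ↔ WSameSide p q x y := by
  have hs : sign (rep q - rep p) * sign (rep q - rep p) = 1 := by
    rcases (sub_ne_zero.2 fun h => hpq (rep_injective h).symm).lt_or_gt with h | h
    · rw [sign_neg h]; rfl
    · rw [sign_pos h]; rfl
  rw [WSameSide, ← sign_nonneg_iff, ← sign_nonneg_iff (a := _ * _), sign_mul, sign_mul,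
    sign_chordSide_emb, sign_chordSide_emb, mul_mul_mul_comm, hs, mul_one]

lemma emb_eq_toCircle (x : 𝕋) : emb x = AddCircle.toCircle x := by
  conv_rhs => rw [← coe_rep x]
  rw [AddCircle.toCircle_apply_mk, Circle.coe_exp, emb_eq]
  push_cast; ring_nf

lemma emb_injective : Function.Injective emb := fun x y h =>
  AddCircle.injective_toCircle one_ne_zero (Circle.ext (by rwa [← emb_eq_toCircle,
    ← emb_eq_toCircle]))

lemma chordSide_eq_zero_of_mem_chord {p q : 𝕋} {v : ℂ} (hv : v ∈ chord p q) :
    chordSide p q v = 0 := by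
  obtain ⟨a, b, -, -, hab, rfl⟩ := hv
  have := Convex.combo_affine_apply hab (f := (chordSide p q).toAffineMap) (x := emb p)
    (y := emb q)
  simp only [ContinuousAffineMap.coe_toAffineMap, smul_eq_mul] at this
  rw [this, chordSide_apply, chordSide_apply, sub_self, mul_zero, zero_im, mul_zero, zero_add,
    conj_mul', ← ofReal_pow, ofReal_im, mul_zero]

lemma normSq_emb_add_smul (p q : 𝕋) (s : ℝ) :
    normSq (emb p + s • (emb q - emb p)) = 1 + (s ^ 2 - s) * normSq (emb q - emb p) := by
  have hp : normSq (emb p) = 1 := by simp [normSq_eq_norm_sq]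
  have hq : normSq (emb q) = 1 := by simp [normSq_eq_norm_sq]
  simp only [normSq_apply, add_re, add_im, sub_re, sub_im, real_smul, mul_re, mul_im,
    ofReal_re, ofReal_im] at hp hq ⊢
  linear_combination (1 - s) * hp + s * hq

lemma mem_chord_of_chordSide_eq_zero {p q : 𝕋} (hpq : p ≠ q) {v : ℂ} (hv : ‖v‖ ≤ 1)
    (h : chordSide p q v = 0) : v ∈ chord p q := by
  set D := emb q - emb p
  have hD : D ≠ 0 := sub_ne_zero.2 fun h => hpq (emb_injective h).symm
  -- `v - emb p` is a real multiple `s • D` of the direction of the chord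
  set s := ((v - emb p) / D).re
  have hvs : v = emb p + s • D := by
    have him : ((v - emb p) / D).im = 0 := by
      rw [div_eq_mul_inv, inv_def, show (v - emb p) * (conj D * ((normSq D)⁻¹ : ℝ)) =
        ((normSq D)⁻¹ : ℝ) * (conj D * (v - emb p)) by ring, im_ofReal_mul, ← chordSide_apply, h,
        mul_zero]
    rw [real_smul, show (s : ℂ) = (v - emb p) / D from ext rfl (by simp [him]),
      div_mul_cancel₀ _ hD, add_sub_cancel]
  have hs : s ^ 2 - s ≤ 0 := by
    have := normSq_emb_add_smul p q s
    rw [← hvs, normSq_eq_norm_sq] at this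
    have hD' : 0 < normSq D := normSq_pos.2 hD
    nlinarith [norm_nonneg v]
  rw [chord, segment_eq_image']
  exact ⟨s, ⟨by nlinarith, by nlinarith⟩, hvs.symm⟩

end Chords

section Cylinders

variable {α : 𝕋}

noncomputable def leafSide (α : 𝕋) (w : List Bool) : ℂ →ᴬ[ℝ] ℝ :=
  chordSide (wtld α w (star1 α)) (wtld α w (star2 α))

lemma diskMinus_eq (α : 𝕋) (m : ℕ) : diskMinus α m =
    Metric.closedBall 0 1 ∩ {v | ∀ w : {w : List Bool // w.length = m}, leafSide α w v ≠ 0} := by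
  ext v
  simp only [diskMinus, chordsUnion, Set.mem_sdiff, Set.mem_iUnion, Set.mem_inter_iff,
    Set.mem_ofPred_eq, Subtype.forall, not_exists, and_congr_right_iff]
  intro hv
  refine forall₂_congr fun w _ => not_congr ⟨chordSide_eq_zero_of_mem_chord,
    mem_chord_of_chordSide_eq_zero (wtld_star1_ne_star2 w) (by simpa using hv)⟩

lemma setOf_emb_mem_closure_connectedComponentIn {m : ℕ} {z₀ : ℂ} (hz₀ : z₀ ∈ diskMinus α m) :
    {x | emb x ∈ closure (connectedComponentIn (diskMinus α m) z₀)} =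
      {x | ∀ w : List Bool, w.length = m → 0 ≤ leafSide α w (emb x) * leafSide α w z₀} := by
  have : Finite {w : List Bool // w.length = m} := (List.finite_length_eq Bool m).to_subtype
  rw [diskMinus_eq] at hz₀ ⊢
  rw [closure_connectedComponentIn_inter_forall_ne_zero (convex_closedBall 0 1)
    Metric.isClosed_closedBall hz₀]
  ext x
  simp [Subtype.forall]

lemma emb_mem_diskMinus {m : ℕ} {z : 𝕋} (hz : ∀ w : List Bool, w.length = m →
    leafSide α w (emb z) ≠ 0) : emb z ∈ diskMinus α m := by
  rw [diskMinus_eq]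
  exact ⟨by simp, fun w => hz w w.2⟩

lemma isGCS_and_mem_iff {m : ℕ} {z : 𝕋}
    (hz : ∀ w : List Bool, w.length = m → leafSide α w (emb z) ≠ 0) (C : Set 𝕋) :
    IsGCS α m C ∧ z ∈ C ↔
      C = {x | ∀ w : List Bool, w.length = m →
        0 ≤ leafSide α w (emb x) * leafSide α w (emb z)} := by
  constructor
  · rintro ⟨⟨z₀, hz₀, rfl⟩, hzC⟩
    rw [setOf_emb_mem_closure_connectedComponentIn hz₀] at hzC ⊢
    refine Set.ext fun x => forall₂_congr fun w hw => ?_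
    have hz₀w : leafSide α w z₀ ≠ 0 := by
      rw [diskMinus_eq] at hz₀
      exact hz₀.2 ⟨w, hw⟩
    have hpos := (hzC w hw).lt_of_ne' (mul_ne_zero (hz w hw) hz₀w)
    rcases mul_pos_iff.1 hpos with ⟨h₁, h₂⟩ | ⟨h₁, h₂⟩
    · rw [mul_nonneg_iff_of_pos_right h₁, mul_nonneg_iff_of_pos_right h₂]
    · rw [← neg_mul_neg, ← neg_mul_neg (leafSide α w (emb x)),
        mul_nonneg_iff_of_pos_right (neg_pos.2 h₁), mul_nonneg_iff_of_pos_right (neg_pos.2 h₂)]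
  · rintro rfl
    refine ⟨⟨emb z, emb_mem_diskMinus hz, ?_⟩, fun w _ => mul_self_nonneg _⟩
    rw [setOf_emb_mem_closure_connectedComponentIn (emb_mem_diskMinus hz)]

variable (hα : ¬ Periodic' α)
include hα

lemma leafSide_emb_wtld_ne_zero {g w : List Bool} (hg : g ≠ []) (hw : w.length = g.length - 1) :
    leafSide α w (emb (wtld α g (star1 α))) ≠ 0 := by
  have : g.length ≠ 0 := by simpa using hg
  rw [← sign_ne_zero, leafSide, sign_chordSide_emb, chordPow, sign_mul]
  refine mul_ne_zero (mul_ne_zero ?_ ?_) ?_ <;> rw [sign_ne_zero, sub_ne_zero] <;>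
    refine rep_injective.ne ?_
  · exact isStar_star1.wtld_ne_wtld hα isStar_star1 (by omega)
  · exact isStar_star1.wtld_ne_wtld hα isStar_star2 (by omega)
  · exact (wtld_star1_ne_star2 w).symm

theorem isGCS_and_mem_iff_eq_cell {g : List Bool} (hg : g ≠ []) (C : Set 𝕋) :
    IsGCS α (g.length - 1) C ∧ wtld α g (star1 α) ∈ C ↔ C = cell α g := by
  rw [isGCS_and_mem_iff (fun w hw => leafSide_emb_wtld_ne_zero hα hg hw)]
  refine Eq.congr_right (Set.ext fun x => forall₂_congr fun w _ => ?_)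
  rw [leafSide, chordSide_emb_mul_nonneg_iff (wtld_star1_ne_star2 w), wSameSide_comm]

end Cylinders

section Masks

/-- `u` is obtained from `g` by replacing some letters with `⋆`. -/
def IsMaskOf (u : List Letter) (g : List Bool) : Prop :=
  u.length = g.length ∧ ∀ i < g.length,
    u.getD i Letter.star ≠ Letter.star → u.getD i Letter.star = letterOf (g.getD i true)

lemma isMaskOf_legal (α : 𝕋) (g : List Bool) : IsMaskOf (legal α g) g := by
  induction g with
  | nil => exact ⟨rfl, fun i hi => absurd hi (Nat.not_lt_zero i)⟩
  | cons b g ih =>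
    refine ⟨by simp [legal, ih.1], fun i hi hne => ?_⟩
    cases i with
    | zero =>
      simp only [legal, List.getD_cons_zero] at hne ⊢
      split_ifs at hne ⊢ with h
      · exact absurd rfl hne
      · rfl
    | succ i => exact ih.2 i (by simpa using hi) hne

variable {α : 𝕋} {u u' : List Letter} {g : List Bool}

lemma IsMaskOf.set (hu : IsMaskOf u g) {i : ℕ} (hi : u.getD i Letter.star = Letter.star)
    (b : Bool) : IsMaskOf u (g.set i b) := by
  refine ⟨by rw [List.length_set, hu.1], fun j hj hne => ?_⟩
  rw [List.length_set] at hj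
  have hji : j ≠ i := by rintro rfl; exact hne hi
  rw [hu.2 j hj hne, List.getD_eq_getElem (g.set i b) true (by rwa [List.length_set]),
    List.getElem_set_ne (Ne.symm hji), List.getD_eq_getElem g true hj]

variable (hα : ¬ Periodic' α)
include hα

lemma IsMaskOf.wtld_mem_cylSet (hu : IsMaskOf u g) {s : 𝕋} (hs : IsStar α s) :
    wtld α g s ∈ cylSet α u := by
  intro i hi
  by_cases h : u.getD i Letter.star = Letter.star
  · rw [h]; exact Set.mem_univ _
  · rw [hu.2 i (hu.1 ▸ hi) h, semi_letterOf]
    exact openArcB_subset_arcB _ (hs.iterate_dbl_wtld_mem_openArcB hα g (hu.1 ▸ hi))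

lemma wtld_flip_notMem_cylSet (hu : IsMaskOf u g) {i : ℕ} (hi : i < g.length)
    (hne : u.getD i Letter.star ≠ Letter.star) :
    wtld α (g.set i !(g.getD i true)) (star1 α) ∉ cylSet α u := by
  intro h
  have hdigit := isStar_star1.iterate_dbl_wtld_mem_openArcB hα (g.set i !(g.getD i true))
    (i := i) (by rwa [List.length_set])
  have := h i (hu.1 ▸ hi)
  rw [hu.2 i hi hne, semi_letterOf] at this
  rw [List.getD_eq_getElem _ _ (by rwa [List.length_set]), List.getElem_set_self] at hdigit
  exact notMem_arcB_of_mem_openArcB_not hdigit this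

/-- Flipping a starred letter of `g` keeps `g̃(⋆₁)` in `C(u)`, so a cylinder set determines
where the stars of its word are. -/
lemma IsMaskOf.getD_eq_star_of_cylSet_subset (hu : IsMaskOf u g) (hu' : IsMaskOf u' g)
    (h : cylSet α u ⊆ cylSet α u') {i : ℕ} (hi : i < g.length)
    (hstar : u.getD i Letter.star = Letter.star) : u'.getD i Letter.star = Letter.star := by
  by_contra hne
  exact wtld_flip_notMem_cylSet hα hu' hi hne
    (h ((hu.set hstar _).wtld_mem_cylSet hα isStar_star1))

theorem IsMaskOf.eq_of_cylSet_eq (hu : IsMaskOf u g) (hu' : IsMaskOf u' g)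
    (h : cylSet α u = cylSet α u') : u = u' := by
  refine List.ext_getElem (hu.1.trans hu'.1.symm) fun i hi hi' => ?_
  rw [← List.getD_eq_getElem _ Letter.star hi, ← List.getD_eq_getElem _ Letter.star hi']
  have hig : i < g.length := hu.1 ▸ hi
  by_cases hstar : u.getD i Letter.star = Letter.star
  · rw [hstar, hu.getD_eq_star_of_cylSet_subset hα hu' h.subset hig hstar]
  · have hstar' : u'.getD i Letter.star ≠ Letter.star :=
      fun h' => hstar (hu'.getD_eq_star_of_cylSet_subset hα hu h.symm.subset hig h')
    rw [hu.2 i hig hstar, hu'.2 i hig hstar']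

end Masks

end Lamination

open Lamination in
/-- for every `g ∈ {L,R}^n` there is a unique legal word `legal(g)` obtained
from `g` by replacing some digits with `⋆` such that `C(legal(g))` is a generalized cylinder
set of degree `n-1` containing `g̃(⋆₁)` and `g̃(⋆₂)`. -/
theorem stmt_12 (α : 𝕋) (hα : ¬ Periodic' α) (g : List Bool) (hg : g ≠ []) :
    ∃! u : List Letter, IsLegalOf α g u := by
  have hcell := cylSet_legal hα hg
  have hlegal := isMaskOf_legal α g
  refine ⟨legal α g, ⟨hlegal.1, hlegal.2, ?_, hlegal.wtld_mem_cylSet hα isStar_star1,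
    hlegal.wtld_mem_cylSet hα isStar_star2⟩, ?_⟩
  · exact ((isGCS_and_mem_iff_eq_cell hα hg _).2 hcell).1
  · rintro u ⟨hlen, hmask, hgcs, hmem, -⟩
    exact IsMaskOf.eq_of_cylSet_eq hα ⟨hlen, hmask⟩ hlegal
      (((isGCS_and_mem_iff_eq_cell hα hg _).1 ⟨hgcs, hmem⟩).trans hcell.symm)
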